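/- arXiv:1903.07462 — 3 statements merged into one kernel-verified Lean document; each statement's English description precedes it below -/
import Mathlib

section
/- Monotonicity of online determinability under subsets: for nonempty finite sets of states S₁ ⊆ S₂, if S₂ is online determinable (i.e., Γ(S₂) ≠ ∞ in the paper's notation), then S₁ is online determinable. -/
variable {I S O : Type} [Fintype I] [Fintype S] [Fintype O]
  [DecidableEq I] [DecidableEq S] [DecidableEq O]

/-- Output sequence generated from state `s` by input word `w`. -/
def Hout (sig : I → S → S) (rho : S → O) : S → List I → List O
  | s, [] => [rho s]
  | s, i :: w => rho s :: Hout sig rho (sig i s) w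

/-- Derivation function: successors of `T` under input `i` producing output `o`. -/
def zeta (sig : I → S → S) (rho : S → O) (T : Finset S) (i : I) (o : O) : Finset S :=
  (T.image (sig i)).filter (fun s' => rho s' = o)

/-- Online determinability of a finite set of states. -/
inductive Det (sig : I → S → S) (rho : S → O) : Finset S → Prop
  | single (T : Finset S) (h : T.card = 1) : Det sig rho T
  | step (T : Finset S) (i : I) (hinj : (T.image (sig i)).card = T.card)
      (h : ∀ o : O, (zeta sig rho T i o).Nonempty → Det sig rho (zeta sig rho T i o)) :
      Det sig rho T

/-- Safe inputs for a set of states. -/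
def psi (sig : I → S → S) (rho : S → O) (T : Finset S) : Set I :=
  {i | (T.image (sig i)).card = T.card ∧
    ∀ o : O, (zeta sig rho T i o).Nonempty → Det sig rho (zeta sig rho T i o)}

theorem Finset.card_image_eq_of_subset {α β : Type*} [DecidableEq β] {f : α → β}
    {s t : Finset α} (hst : s ⊆ t) (ht : (t.image f).card = t.card) :
    (s.image f).card = s.card :=
  Finset.card_image_of_injOn ((Finset.injOn_of_card_image_eq ht).mono (Finset.coe_subset.2 hst))

omit [Fintype I] [Fintype S] [Fintype O] [DecidableEq I] in
theorem zeta_mono (sig : I → S → S) (rho : S → O) {T1 T2 : Finset S} (hsub : T1 ⊆ T2)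
    (i : I) (o : O) : zeta sig rho T1 i o ⊆ zeta sig rho T2 i o :=
  Finset.filter_subset_filter _ (Finset.image_subset_image hsub)

theorem det_mono (sig : I → S → S) (rho : S → O) (T1 T2 : Finset S)
    (hsub : T1 ⊆ T2) (hne : T1.Nonempty) (hdet : Det sig rho T2) :
    Det sig rho T1 := by
  induction hdet generalizing T1 with
  | single T hcard =>
    have hT : T1 = T :=
      Finset.eq_of_subset_of_card_le hsub (hcard ▸ Finset.one_le_card.2 hne)
    exact hT ▸ Det.single T hcard
  | step T i hinj _ ih =>
    refine Det.step T1 i (Finset.card_image_eq_of_subset hsub hinj) fun o hzeta => ?_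
    have hzsub := zeta_mono sig rho hsub i o
    exact ih o (hzeta.mono hzsub) _ hzsub hzeta
end

section
/- Type-III observability implies online observability: if a BCN has a single input word distinguishing all pairs of distinct initial states, then for every output o, the nonempty set ζ₀(o) = { s | ρ s = o } of states consistent with initial output o is online determinable. -/
variable {I S O : Type} [Fintype I] [Fintype S] [Fintype O]
  [DecidableEq I] [DecidableEq S] [DecidableEq O]

/-! A word `w` separating all states keeps separating along the tree of `Det`: the states of a
block `zeta T i o` share their current output, so after reading the first letter `i` of `w` they
are still separated by the rest of `w`, which also forces `sig i` to be injective on the block.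
When `w` is used up, a separated block whose states share their output is a singleton. -/

section

open Finset

variable (sig : I → S → S) (rho : S → O)

omit [Fintype I] [Fintype S] [Fintype O] [DecidableEq I] [DecidableEq S] [DecidableEq O] in
theorem injOn_hout_comp_of_injOn_hout_cons {T : Set S} {o : O} {i : I} {w : List I}
    (hT : ∀ s ∈ T, rho s = o) (hsep : Set.InjOn (fun s => Hout sig rho s (i :: w)) T) :
    Set.InjOn ((fun s => Hout sig rho s w) ∘ sig i) T := by
  intro s hs s' hs' h
  apply hsep hs hs'
  simp only [Hout, hT s hs, hT s' hs']
  exact congrArg (o :: ·) h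

omit [Fintype I] [Fintype S] [Fintype O] [DecidableEq I] in
theorem zeta_subset_image (T : Finset S) (i : I) (o : O) :
    zeta sig rho T i o ⊆ T.image (sig i) :=
  filter_subset _ _

omit [Fintype I] [Fintype S] [Fintype O] [DecidableEq I] in
theorem rho_eq_of_mem_zeta {T : Finset S} {i : I} {o : O} {t : S}
    (ht : t ∈ zeta sig rho T i o) : rho t = o :=
  (mem_filter.1 ht).2

omit [Fintype I] [Fintype S] [Fintype O] [DecidableEq I] in
theorem det_of_injOn_hout (w : List I) {T : Finset S} {o : O} (hne : T.Nonempty)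
    (hT : ∀ s ∈ T, rho s = o) (hsep : Set.InjOn (fun s => Hout sig rho s w) T) :
    Det sig rho T := by
  induction w generalizing T o with
  | nil =>
    have hsub : T.card ≤ 1 := card_le_one.2 fun s hs s' hs' =>
      hsep hs hs' (by simp only [Hout, hT s hs, hT s' hs'])
    exact Det.single T (le_antisymm hsub hne.card_pos)
  | cons i w ih =>
    have hcomp := injOn_hout_comp_of_injOn_hout_cons sig rho hT hsep
    refine Det.step T i (card_image_of_injOn hcomp.of_comp) fun o' hne' => ?_
    refine ih hne' (fun t ht => rho_eq_of_mem_zeta sig rho ht) ?_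
    have himage : Set.InjOn (fun s => Hout sig rho s w) ↑(T.image (sig i)) := by
      rw [coe_image]
      exact hcomp.image_of_comp
    exact himage.mono (coe_subset.2 (zeta_subset_image sig rho T i o'))

end

theorem typeIII_implies_online (sig : I → S → S) (rho : S → O)
    (h3 : ∃ w : List I, ∀ s s' : S, s ≠ s' → Hout sig rho s w ≠ Hout sig rho s' w) :
    ∀ o : O, (Finset.univ.filter (fun s : S => rho s = o)).Nonempty →
      Det sig rho (Finset.univ.filter (fun s : S => rho s = o)) := by
  obtain ⟨w, hw⟩ := h3
  intro o hne
  refine det_of_injOn_hout sig rho w hne (fun s hs => (Finset.mem_filter.1 hs).2) ?_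
  exact fun s _ s' _ h => by_contra fun hne' => hw s s' hne' h
end

section
/- Online determinability implies pointwise distinguishability: if a nonempty finite set of states T is online determinable, then for every state s ∈ T there exists an input word w such that for all s' ∈ T with s' ≠ s, H(s', w) ≠ H(s, w). -/
variable {I S O : Type} [Fintype I] [Fintype S] [Fintype O]
  [DecidableEq I] [DecidableEq S] [DecidableEq O]

section

omit [Fintype I] [Fintype S] [Fintype O] [DecidableEq I] [DecidableEq S] [DecidableEq O]

variable (sig : I → S → S) (rho : S → O)

theorem Hout_head? (s : S) (w : List I) : (Hout sig rho s w).head? = some (rho s) := by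
  cases w <;> rfl

theorem Hout_ne_of_rho_ne {s s' : S} (h : rho s ≠ rho s') (w : List I) :
    Hout sig rho s w ≠ Hout sig rho s' w := fun e => by
  simpa [Hout_head?, h] using congrArg List.head? e

theorem Hout_cons_ne_of_ne {s s' : S} {i : I} {w : List I}
    (h : Hout sig rho (sig i s) w ≠ Hout sig rho (sig i s') w) :
    Hout sig rho s (i :: w) ≠ Hout sig rho s' (i :: w) := by
  simp only [Hout, ne_eq, List.cons.injEq, not_and]
  exact fun _ => h

def PointwiseDisting (T : Finset S) : Prop :=
  ∀ s ∈ T, ∃ w : List I, ∀ s' ∈ T, s' ≠ s → Hout sig rho s' w ≠ Hout sig rho s w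

theorem pointwiseDisting_of_card_le_one {T : Finset S} (hT : T.card ≤ 1) :
    PointwiseDisting sig rho T := fun s hs =>
  ⟨[], fun s' hs' hne => absurd (Finset.card_le_one.mp hT s' hs' s hs) hne⟩

end

section

omit [Fintype I] [Fintype S] [Fintype O] [DecidableEq I]

variable (sig : I → S → S) (rho : S → O)

theorem sig_mem_zeta {T : Finset S} {s : S} (hs : s ∈ T)
    (i : I) : sig i s ∈ zeta sig rho T i (rho (sig i s)) :=
  Finset.mem_filter.mpr ⟨Finset.mem_image_of_mem _ hs, rfl⟩

/-- Feeding `i` first and then the word that separates `sig i s` inside its `zeta`-class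
separates `s`: states leaving that class already differ in their first output after `i`. -/
theorem pointwiseDisting_of_zeta {T : Finset S} {i : I}
    (hinj : Set.InjOn (sig i) T)
    (hzeta : ∀ o, (zeta sig rho T i o).Nonempty → PointwiseDisting sig rho (zeta sig rho T i o)) :
    PointwiseDisting sig rho T := by
  intro s hs
  have hmem := sig_mem_zeta sig rho hs i
  obtain ⟨w, hw⟩ := hzeta _ ⟨_, hmem⟩ _ hmem
  refine ⟨i :: w, fun s' hs' hne => Hout_cons_ne_of_ne sig rho ?_⟩
  by_cases hro : rho (sig i s') = rho (sig i s)
  · refine hw _ ?_ (fun e => hne (hinj hs' hs e))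
    rw [← hro]
    exact sig_mem_zeta sig rho hs' i
  · exact Hout_ne_of_rho_ne sig rho hro w

end

theorem det_implies_pointwise_disting_general (sig : I → S → S) (rho : S → O)
    (T : Finset S) (hdet : Det sig rho T) :
    ∀ s ∈ T, ∃ w : List I, ∀ s' ∈ T, s' ≠ s →
      Hout sig rho s' w ≠ Hout sig rho s w := by
  induction hdet with
  | single T hcard => exact pointwiseDisting_of_card_le_one sig rho hcard.le
  | step T i hinj _ ih => exact pointwiseDisting_of_zeta sig rho (Finset.card_image_iff.mp hinj) ih

theorem det_implies_pointwise_disting (sig : I → S → S) (rho : S → O)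
    (T : Finset S) (hne : T.Nonempty) (hdet : Det sig rho T) :
    ∀ s ∈ T, ∃ w : List I, ∀ s' ∈ T, s' ≠ s →
      Hout sig rho s' w ≠ Hout sig rho s w :=
  det_implies_pointwise_disting_general sig rho T hdet
end
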